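/- arXiv:2006.01953 — 5 statements merged into one kernel-verified Lean document; each statement's English description precedes it below -/
import Mathlib

section
/- Let p : X → Y be a quotient map between topological spaces and let Δ be the partition of X into fibers of p. Suppose that for every compact L ⊆ Y there exists a compact K ⊆ X with p(K) = L (property (K)). Then the induced map ψ : End(X,Δ) → End(Y), sending a Δ-map f to the unique continuous g : Y → Y with p ∘ f = g ∘ p, is continuous with respect to the compact-open topologies. -/
/-- A `Δ`-map is a continuous self-map of `X` mapping fibers of `p` into fibers of `p`;
`End(X,Δ)` is the space of all `Δ`-maps with the compact-open topology. -/
def DeltaEnd {X Y : Type*} [TopologicalSpace X] (p : X → Y) : Type _ :=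
  { f : C(X, X) // ∀ x x' : X, p x = p x' → p (f x) = p (f x') }

instance {X Y : Type*} [TopologicalSpace X] (p : X → Y) :
    TopologicalSpace (DeltaEnd p) :=
  instTopologicalSpaceSubtype

/-! Property (K) makes every subbasic set `{g | g '' L ⊆ U}` of `C(Y, Y)` pull back, along a
lift `p ∘ f = g ∘ p`, to the subbasic set `{f | f '' K ⊆ p ⁻¹' U}` of `C(X, X)` with
`p '' K = L`. -/

theorem Set.mapsTo_image_iff_of_semiconj {X Y : Type*} {p : X → Y} {f : X → X} {g : Y → Y}
    (h : ∀ x, g (p x) = p (f x)) {K : Set X} {U : Set Y} :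
    Set.MapsTo g (p '' K) U ↔ Set.MapsTo f K (p ⁻¹' U) := by
  rw [Set.mapsTo_image_iff]
  exact Set.EqOn.mapsTo_iff fun x _ => h x

theorem ContinuousMap.continuous_of_continuous_semiconj_lift {Z X Y : Type*}
    [TopologicalSpace Z] [TopologicalSpace X] [TopologicalSpace Y] {p : X → Y}
    (hp : Continuous p) (hK : ∀ L : Set Y, IsCompact L → ∃ K : Set X, IsCompact K ∧ p '' K = L)
    {φ : Z → C(Y, Y)} {F : Z → C(X, X)} (hF : Continuous F)
    (h : ∀ z x, φ z (p x) = p (F z x)) : Continuous φ := by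
  refine ContinuousMap.continuous_compactOpen.2 fun L hL U hU => ?_
  obtain ⟨K, hKc, rfl⟩ := hK L hL
  have hpre : {z | Set.MapsTo (φ z) (p '' K) U} = F ⁻¹' {f | Set.MapsTo f K (p ⁻¹' U)} :=
    Set.ext fun z => Set.mapsTo_image_iff_of_semiconj (h z)
  rw [hpre]
  exact (ContinuousMap.isOpen_setOfPred_mapsTo hKc (hU.preimage hp)).preimage hF

/-- If `p : X → Y` is a quotient map with property (K) (every compact `L ⊆ Y` is the
image of some compact `K ⊆ X`), then the induced map `ψ : End(X,Δ) → End(Y)`,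
characterized by `p ∘ f = ψ(f) ∘ p`, is continuous for the compact-open topologies. -/
theorem induced_map_continuous_of_propK
    {X Y : Type*} [TopologicalSpace X] [TopologicalSpace Y]
    {p : X → Y} (hp : Topology.IsQuotientMap p)
    (hK : ∀ L : Set Y, IsCompact L → ∃ K : Set X, IsCompact K ∧ p '' K = L)
    (ψ : DeltaEnd p → C(Y, Y))
    (hψ : ∀ f : DeltaEnd p, ∀ x : X, (ψ f) (p x) = p (f.1 x)) :
    Continuous ψ :=
  ContinuousMap.continuous_of_continuous_semiconj_lift hp.continuous hK continuous_subtype_val hψ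
end

section
/- Let Y be a locally compact Hausdorff space and p : X → Y a continuous surjective map that admits local cross sections: for every y ∈ Y there is an open neighborhood V of y and a continuous map f : V → X with p ∘ f = id_V. Then for every compact L ⊆ Y there exists a compact K ⊆ X with p(K) = L. -/
open Set Topology

theorem IsCompact.exists_isCompact_image_eq_of_forall_mem_nhds {X Y : Type*}
    [TopologicalSpace X] [TopologicalSpace Y] {p : X → Y} {L : Set Y} (hL : IsCompact L)
    (hloc : ∀ y ∈ L, ∃ U ∈ 𝓝 y, ∃ K : Set X, IsCompact K ∧ p '' K = U ∩ L) :
    ∃ K : Set X, IsCompact K ∧ p '' K = L := by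
  choose U hU K hK hpK using hloc
  obtain ⟨t, hcover⟩ := hL.elim_nhds_subcover' U hU
  refine ⟨⋃ y ∈ t, K y y.2, t.isCompact_biUnion fun y _ => hK y y.2, ?_⟩
  simp only [image_iUnion, hpK, ← iUnion₂_inter]
  exact inter_eq_right.2 hcover

theorem exists_isCompact_image_eq_inter_of_leftInvOn {X Y : Type*}
    [TopologicalSpace X] [TopologicalSpace Y] [LocallyCompactSpace Y] {p : X → Y} {f : Y → X}
    {V L : Set Y} {y : Y} (hV : V ∈ 𝓝 y) (hf : ContinuousOn f V) (hpf : LeftInvOn p f V)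
    (hL : IsClosed L) :
    ∃ U ∈ 𝓝 y, ∃ K : Set X, IsCompact K ∧ p '' K = U ∩ L := by
  obtain ⟨C, hC, hCV, hCc⟩ := local_compact_nhds hV
  refine ⟨C, hC, f '' (C ∩ L), ?_, (hpf.mono (inter_subset_left.trans hCV)).image_image⟩
  exact (hCc.inter_right hL).image_of_continuousOn (hf.mono (inter_subset_left.trans hCV))

theorem propK_of_local_cross_sections_general
    {X Y : Type*} [TopologicalSpace X] [TopologicalSpace Y]
    [LocallyCompactSpace Y] [T2Space Y]
    {p : X → Y}
    (hsect : ∀ y : Y, ∃ V : Set Y, IsOpen V ∧ y ∈ V ∧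
      ∃ f : Y → X, ContinuousOn f V ∧ ∀ z ∈ V, p (f z) = z) :
    ∀ L : Set Y, IsCompact L → ∃ K : Set X, IsCompact K ∧ p '' K = L := by
  intro L hL
  refine hL.exists_isCompact_image_eq_of_forall_mem_nhds fun y _ => ?_
  obtain ⟨V, hVo, hyV, f, hf, hpf⟩ := hsect y
  exact exists_isCompact_image_eq_inter_of_leftInvOn (hVo.mem_nhds hyV) hf hpf hL.isClosed

/-- If `Y` is locally compact Hausdorff and the continuous surjection `p : X → Y`
admits local cross sections, then every compact `L ⊆ Y` is the image of some
compact `K ⊆ X`. -/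
theorem propK_of_local_cross_sections
    {X Y : Type*} [TopologicalSpace X] [TopologicalSpace Y]
    [LocallyCompactSpace Y] [T2Space Y]
    {p : X → Y} (hc : Continuous p) (hs : Function.Surjective p)
    (hsect : ∀ y : Y, ∃ V : Set Y, IsOpen V ∧ y ∈ V ∧
      ∃ f : Y → X, ContinuousOn f V ∧ ∀ z ∈ V, p (f z) = z) :
    ∀ L : Set Y, IsCompact L → ∃ K : Set X, IsCompact K ∧ p '' K = L :=
  propK_of_local_cross_sections_general hsect
end

section
/- Let Y be a topological space, V(Y) its set of branch points (points y with H(y) ≠ {y}, where H(y) is the set of points not T₂-disjoint from y), and z ∈ V(Y). Then for any subset L ⊆ Y, the subspace B = (L \ V(Y)) ∪ {z} is Hausdorff. -/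
/-! Two distinct points one of which is not a branch point have disjoint neighbourhoods, and these
restrict to any subspace. The subspace `(L \ V(Y)) ∪ {z}` contains no branch point other than `z`,
so any two of its distinct points can be separated. -/

open Filter Topology

/-- The Hausdorff closure of `y`: the set of points `z` that are not `T₂`-disjoint
from `y` in `Y`. -/
def HausdorffClosure {Y : Type*} [TopologicalSpace Y] (y : Y) : Set Y :=
  { z | ∀ U V : Set Y, IsOpen U → IsOpen V → y ∈ U → z ∈ V → (U ∩ V).Nonempty }

/-- The set of branch points of `Y`: points `y` with `H(y) ≠ {y}`. -/
def BranchPoints (Y : Type*) [TopologicalSpace Y] : Set Y :=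
  { y | ∃ z : Y, z ≠ y ∧ z ∈ HausdorffClosure y }

section

variable {Y : Type*} [TopologicalSpace Y]

theorem mem_hausdorffClosure_iff {a b : Y} :
    b ∈ HausdorffClosure a ↔ ¬Disjoint (𝓝 a) (𝓝 b) := by
  simp only [(nhds_basis_opens a).disjoint_iff (nhds_basis_opens b), HausdorffClosure,
    Set.mem_ofPred_eq, ← Set.not_disjoint_iff_nonempty_inter]
  grind

theorem disjoint_nhds_of_notMem_branchPoints {a b : Y} (ha : a ∉ BranchPoints Y)
    (hab : a ≠ b) : Disjoint (𝓝 a) (𝓝 b) := by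
  by_contra h
  exact ha ⟨b, hab.symm, mem_hausdorffClosure_iff.mpr h⟩

theorem t2Space_of_subsingleton_inter_branchPoints {S : Set Y}
    (hS : (S ∩ BranchPoints Y).Subsingleton) : T2Space S := by
  refine t2Space_iff_disjoint_nhds.mpr fun a b hab => ?_
  have hab' : (a : Y) ≠ b := Subtype.coe_injective.ne hab
  have hsep : Disjoint (𝓝 (a : Y)) (𝓝 (b : Y)) := by
    by_cases ha : (a : Y) ∈ BranchPoints Y
    · have hb : (b : Y) ∉ BranchPoints Y := fun hb => hab' (hS ⟨a.2, ha⟩ ⟨b.2, hb⟩)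
      exact (disjoint_nhds_of_notMem_branchPoints hb hab'.symm).symm
    · exact disjoint_nhds_of_notMem_branchPoints ha hab'
  simpa only [nhds_subtype] using disjoint_comap hsep

end

theorem hausdorff_of_remove_branchPoints_general
    {Y : Type*} [TopologicalSpace Y] (L : Set Y) (z : Y) :
    T2Space ((L \ BranchPoints Y) ∪ {z} : Set Y) := by
  refine t2Space_of_subsingleton_inter_branchPoints
    (Set.subsingleton_singleton.anti (t := {z}) ?_)
  rintro x ⟨⟨-, hx⟩ | rfl, hxV⟩
  exacts [absurd hxV hx, rfl]

/-- For a branch point `z` and any subset `L ⊆ Y`, the subspace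
`B = (L \ V(Y)) ∪ {z}` is Hausdorff. -/
theorem hausdorff_of_remove_branchPoints
    {Y : Type*} [TopologicalSpace Y] (L : Set Y) (z : Y)
    (hz : z ∈ BranchPoints Y) :
    T2Space ((L \ BranchPoints Y) ∪ {z} : Set Y) :=
  hausdorff_of_remove_branchPoints_general L z
end

section
/- Let a topological group G act continuously on a Hausdorff Baire space X such that G is a countable union of compact subsets, the action has at least two distinct orbits, and every orbit is dense in X. Then there exists a compact subset L of the orbit space Y = X/G (with the quotient topology) such that no compact subset K ⊆ X satisfies p(K) = L, where p : X → Y is the orbit projection. -/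
/-!
If `K ⊆ X` is compact, its saturation `G • K` is σ-compact because `G` is. Since every orbit is
dense, the orbit space is indiscrete: hence every subset of it is compact, and a saturated set
`p⁻¹' L` with `L ≠ univ` has empty interior (its interior would project onto a nonempty open
subset of `L`). Take `L` to be the complement of the class of a point `y`. If `p '' K = L`, then
`X` is the union of the saturations of `K` and of `{y}`, two σ-compact sets with empty interior,
which are meagre since compact sets are closed in `X`; this contradicts the Baire property.
-/

open Set MulAction

lemma IsSigmaCompact.prod {X Y : Type*} [TopologicalSpace X] [TopologicalSpace Y] {s : Set X}
    {t : Set Y} (hs : IsSigmaCompact s) (ht : IsSigmaCompact t) : IsSigmaCompact (s ×ˢ t) := by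
  obtain ⟨K, hK, rfl⟩ := hs
  obtain ⟨L, hL, rfl⟩ := ht
  rw [← iUnion_prod]
  exact isSigmaCompact_iUnion_of_isCompact _ fun n ↦ (hK n.1).prod (hL n.2)

lemma IsSigmaCompact.isMeagre {X : Type*} [TopologicalSpace X] [T2Space X] {s : Set X}
    (hs : IsSigmaCompact s) (hint : interior s = ∅) : IsMeagre s := by
  obtain ⟨K, hK, rfl⟩ := hs
  refine isMeagre_iUnion fun n ↦ IsNowhereDense.isMeagre ?_
  rw [(hK n).isClosed.isNowhereDense_iff]
  exact subset_empty_iff.mp (hint ▸ interior_mono (subset_iUnion K n))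

namespace MulAction

variable {G X : Type*} [Group G] [MulAction G X]

lemma preimage_image_quotient_mk_eq_image_smul (K : Set X) :
    Quotient.mk (orbitRel G X) ⁻¹' (Quotient.mk (orbitRel G X) '' K) =
      (fun q : G × X ↦ q.1 • q.2) '' (univ ×ˢ K) := by
  ext x
  simp only [mem_preimage, mem_image, Quotient.eq, orbitRel_apply, mem_orbit_iff, mem_prod,
    mem_univ, true_and, Prod.exists]
  constructor
  · rintro ⟨k, hk, g, rfl⟩
    exact ⟨g⁻¹, g • x, hk, inv_smul_smul g x⟩
  · rintro ⟨g, k, hk, rfl⟩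
    exact ⟨k, hk, g⁻¹, inv_smul_smul g k⟩

variable [TopologicalSpace X]

instance indiscreteTopology_quotient_orbitRel [IsMinimal G X] :
    IndiscreteTopology (Quotient (orbitRel G X)) := by
  refine ⟨le_antisymm le_top (TopologicalSpace.le_def.mpr fun U hU ↦ ?_)⟩
  refine (TopologicalSpace.isOpen_top_iff U).mpr (U.eq_empty_or_nonempty.imp_right fun hne ↦ ?_)
  refine eq_univ_of_forall (Quotient.ind fun x ↦ ?_)
  obtain ⟨g, hg⟩ := (hU.preimage continuous_quotient_mk').exists_smul_mem G x
    (hne.preimage Quotient.mk_surjective)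
  exact orbitRel.Quotient.quotient_smul_eq (α := X) (g := g) ▸ hg

lemma interior_preimage_quotient_mk_eq_empty [IsMinimal G X] [ContinuousConstSMul G X]
    {L : Set (Quotient (orbitRel G X))} (hL : L ≠ univ) :
    interior (Quotient.mk (orbitRel G X) ⁻¹' L) = ∅ := by
  set p := Quotient.mk (orbitRel G X)
  have hsub : p '' interior (p ⁻¹' L) ⊆ L :=
    (image_mono interior_subset).trans (image_preimage_subset p L)
  rcases (IndiscreteTopology.isOpen_iff _).mp
      ((isOpenQuotientMap_quotientMk (Γ := G)).isOpenMap _ (isOpen_interior (s := p ⁻¹' L)))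
    with h | h
  · exact image_eq_empty.mp h
  · exact absurd (univ_subset_iff.mp (h ▸ hsub)) hL

lemma _root_.IsSigmaCompact.preimage_image_quotient_mk [TopologicalSpace G] [SigmaCompactSpace G]
    [ContinuousSMul G X] {K : Set X} (hK : IsSigmaCompact K) :
    IsSigmaCompact (Quotient.mk (orbitRel G X) ⁻¹' (Quotient.mk (orbitRel G X) '' K)) := by
  rw [preimage_image_quotient_mk_eq_image_smul]
  exact (isSigmaCompact_univ.prod hK).image continuous_smul

lemma isMeagre_preimage_image_quotient_mk [TopologicalSpace G] [SigmaCompactSpace G]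
    [ContinuousSMul G X] [IsMinimal G X] [T2Space X] {K : Set X} (hK : IsCompact K)
    (hKL : Quotient.mk (orbitRel G X) '' K ≠ univ) :
    IsMeagre (Quotient.mk (orbitRel G X) ⁻¹' (Quotient.mk (orbitRel G X) '' K)) :=
  hK.isSigmaCompact.preimage_image_quotient_mk.isMeagre
    (interior_preimage_quotient_mk_eq_empty hKL)

end MulAction

theorem no_compact_lift_of_dense_orbits_general
    {G X : Type*} [Group G] [TopologicalSpace G]
    [TopologicalSpace X] [T2Space X] [BaireSpace X]
    [MulAction G X] [ContinuousSMul G X]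
    (hσ : ∃ C : ℕ → Set G, (∀ i, IsCompact (C i)) ∧ (⋃ i, C i) = Set.univ)
    (h2 : ∃ x y : X, MulAction.orbit G x ≠ MulAction.orbit G y)
    (hd : ∀ x : X, Dense (MulAction.orbit G x)) :
    ∃ L : Set (Quotient (MulAction.orbitRel G X)), IsCompact L ∧
      ∀ K : Set X, IsCompact K →
        Quotient.mk (MulAction.orbitRel G X) '' K ≠ L := by
  have : SigmaCompactSpace G := ⟨hσ⟩
  have : IsMinimal G X := ⟨hd⟩
  obtain ⟨x, y, hxy⟩ := h2
  set p := Quotient.mk (orbitRel G X)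
  have hpxy : p x ≠ p y := fun h ↦ hxy (orbit_eq_iff.mpr (orbitRel_apply.mp (Quotient.exact h)))
  refine ⟨{p y}ᶜ, isCompact_iff_compactSpace.mpr inferInstance, fun K hK hKL ↦ ?_⟩
  have hL : {p y}ᶜ ≠ univ := compl_ne_univ.mpr (singleton_nonempty _)
  have hK_meagre : IsMeagre (p ⁻¹' {p y}ᶜ) :=
    hKL ▸ isMeagre_preimage_image_quotient_mk hK (hKL ▸ hL)
  have hy_meagre : IsMeagre (p ⁻¹' {p y}) := by
    rw [← image_singleton]
    exact isMeagre_preimage_image_quotient_mk (G := G) isCompact_singleton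
      (by rw [image_singleton]; exact fun h ↦ hpxy (eq_univ_iff_forall.mp h (p x)))
  refine not_isMeagre_of_isOpen (s := univ) isOpen_univ ⟨x, mem_univ x⟩ ?_
  rw [← preimage_univ (f := p), ← union_compl_self {p y}, preimage_union]
  exact hy_meagre.union hK_meagre

/-- Let a topological group `G` act continuously on a Hausdorff Baire space `X`,
where `G` is a countable union of compact sets, the action has at least two
orbits, and every orbit is dense. Then there is a compact subset `L` of the orbit
space `Y = X/G` that is not the image of any compact subset of `X` under the
orbit projection. -/
theorem no_compact_lift_of_dense_orbits
    {G X : Type*} [Group G] [TopologicalSpace G] [IsTopologicalGroup G]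
    [TopologicalSpace X] [T2Space X] [BaireSpace X]
    [MulAction G X] [ContinuousSMul G X]
    (hσ : ∃ C : ℕ → Set G, (∀ i, IsCompact (C i)) ∧ (⋃ i, C i) = Set.univ)
    (h2 : ∃ x y : X, MulAction.orbit G x ≠ MulAction.orbit G y)
    (hd : ∀ x : X, Dense (MulAction.orbit G x)) :
    ∃ L : Set (Quotient (MulAction.orbitRel G X)), IsCompact L ∧
      ∀ K : Set X, IsCompact K →
        Quotient.mk (MulAction.orbitRel G X) '' K ≠ L :=
  no_compact_lift_of_dense_orbits_general hσ h2 hd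
end

section
/- Let f : S¹ → S¹ be the rotation z ↦ z·e^{2πiα} with α irrational, let Δ be the partition of S¹ into orbits of the ℤ-action generated by f, and p : S¹ → Y the projection onto the orbit space with the quotient topology. Then there exists a compact subset L ⊆ Y such that no compact K ⊆ S¹ satisfies p(K) = L. -/
/-!
Every orbit of an irrational rotation is dense, so the orbit space is indiscrete and all of its
subsets are compact; take `L` to be the complement of the class of `1`. If `p '' K = L` with `K`
compact, then `K` is closed and misses the dense orbit of `1`, so it is nowhere dense. The circle
would then be the union of the countable orbit of `1` and the countably many rotated copies of `K`,
a meagre set, contradicting Baire's theorem.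
-/

open Real

/-- The orbit relation of the `ℤ`-action on the circle generated by the rotation
`z ↦ z · e^{2πiα}`: `x ~ y` iff `y = f^k(x)` for some `k ∈ ℤ`. -/
def rotOrbitRel (α : ℝ) (x y : Circle) : Prop :=
  ∃ k : ℤ, (Circle.exp (2 * π * α)) ^ k * x = y

open Set Topology

section Baire

variable {X : Type*} [TopologicalSpace X]

theorem IndiscreteTopology.isCompact [IndiscreteTopology X] (s : Set X) : IsCompact s := by
  have := (IsInducing.subtypeVal : IsInducing ((↑) : s → X)).indiscreteTopology
  exact isCompact_iff_compactSpace.2 inferInstance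

theorem Quot.indiscreteTopology_of_dense {r : X → X → Prop}
    (hr : ∀ x, Dense {y | r x y}) : IndiscreteTopology (Quot r) := by
  refine ⟨eq_top_iff.2 <| TopologicalSpace.le_def.2 fun U hU => ?_⟩
  rw [TopologicalSpace.isOpen_top_iff, or_iff_not_imp_left, ← Ne, ← nonempty_iff_ne_empty]
  rintro ⟨q, hqU⟩
  obtain ⟨x, rfl⟩ := Quot.exists_rep q
  refine eq_univ_of_forall fun q => ?_
  obtain ⟨z, rfl⟩ := Quot.exists_rep q
  obtain ⟨y, hyU, hzy⟩ :=
    (hr z).inter_open_nonempty _ (hU.preimage continuous_quot_mk) ⟨x, hqU⟩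
  exact (Quot.sound hzy).symm ▸ hyU

theorem Set.Countable.isMeagre [T1Space X] [∀ x : X, (𝓝[≠] x).NeBot] {s : Set X}
    (hs : s.Countable) : IsMeagre s := by
  rw [← biUnion_of_singleton s]
  exact isMeagre_biUnion hs fun x _ => IsNowhereDense.isMeagre <| by
    rw [IsNowhereDense, closure_singleton, interior_singleton]

theorem IsClosed.isNowhereDense_of_disjoint_dense {K O : Set X}
    (hK : IsClosed K) (hO : Dense O) (hKO : Disjoint K O) : IsNowhereDense K :=
  hK.isNowhereDense_iff.2 <| interior_eq_empty_iff_dense_compl.2 <| hO.mono hKO.subset_compl_left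

theorem union_iUnion_homeomorph_image_ne_univ [BaireSpace X] [Nonempty X] {ι : Type*}
    [Countable ι] {K O : Set X} (hK : IsClosed K) (hO : Dense O) (hOm : IsMeagre O)
    (hKO : Disjoint K O) (f : ι → X ≃ₜ X) : O ∪ ⋃ i, f i '' K ≠ univ := by
  have hK' : IsNowhereDense K := hK.isNowhereDense_of_disjoint_dense hO hKO
  intro h
  have : IsMeagre (O ∪ ⋃ i, f i '' K) :=
    hOm.union (isMeagre_iUnion fun i => ((f i).isInducing.isNowhereDense_image hK').isMeagre)
  exact not_isMeagre_of_isOpen isOpen_univ univ_nonempty (h ▸ this)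

end Baire

-- With connectedness this gives `(𝓝[≠] x).NeBot`: the circle has no isolated points.
instance : Nontrivial Circle := by
  refine ⟨⟨Circle.exp π, 1, fun h => ?_⟩⟩
  obtain ⟨n, hn⟩ := Circle.exp_eq_one.1 h
  have hn' : ((2 * n : ℤ) : ℝ) = 1 := by
    push_cast
    nlinarith [pi_pos]
  have : 2 * n = 1 := by exact_mod_cast hn'
  omega

theorem rotOrbitRel_equivalence (α : ℝ) : Equivalence (rotOrbitRel α) where
  refl _ := ⟨0, by simp⟩
  symm := by
    rintro _ _ ⟨k, rfl⟩
    exact ⟨-k, by rw [← mul_assoc, ← zpow_add, neg_add_cancel, zpow_zero, one_mul]⟩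
  trans := by
    rintro _ _ _ ⟨k, rfl⟩ ⟨l, rfl⟩
    exact ⟨l + k, by rw [← mul_assoc, ← zpow_add]⟩

theorem denseRange_circleExp_zpow {α : ℝ} (hα : Irrational α) :
    DenseRange fun k : ℤ => Circle.exp (2 * π * α) ^ k := by
  have h : DenseRange fun k : ℤ => k • (α : AddCircle (1 : ℝ)) :=
    AddCircle.denseRange_zsmul_coe_iff.2 (by rwa [div_one])
  have hsurj : Function.Surjective (AddCircle.toCircle (T := 1)) := fun z => by
    obtain ⟨x, rfl⟩ := (AddCircle.homeomorphCircle one_ne_zero).surjective z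
    exact ⟨x, (AddCircle.homeomorphCircle_apply _ x).symm⟩
  convert hsurj.denseRange.comp h AddCircle.continuous_toCircle using 2 with k
  simp [AddCircle.toCircle_zsmul, AddCircle.toCircle_apply_mk]

theorem dense_setOf_rotOrbitRel {α : ℝ} (hα : Irrational α) (x : Circle) :
    Dense {y | rotOrbitRel α x y} :=
  (Homeomorph.mulRight x).surjective.denseRange.comp (denseRange_circleExp_zpow hα)
    (continuous_mul_const x)

/-- For an irrational rotation of the circle, there is a compact subset `L` of the
orbit space `Y` (with the quotient topology) which is not the image of any compact
subset of `S¹` under the natural projection. -/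
theorem no_compact_lift_irrational_rotation
    (α : ℝ) (hα : Irrational α) :
    ∃ L : Set (Quot (rotOrbitRel α)), IsCompact L ∧
      ∀ K : Set Circle, IsCompact K → Quot.mk (rotOrbitRel α) '' K ≠ L := by
  have := Quot.indiscreteTopology_of_dense (dense_setOf_rotOrbitRel hα)
  refine ⟨{Quot.mk _ 1}ᶜ, IndiscreteTopology.isCompact _, fun K hK hKL => ?_⟩
  have hrel := rotOrbitRel_equivalence α
  have hmk := hrel.quot_mk_eq_iff
  have hKO : Disjoint K {y | rotOrbitRel α 1 y} := by
    refine disjoint_left.2 fun y hyK hy => ?_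
    have : Quot.mk _ y ∈ ({Quot.mk _ 1}ᶜ : Set _) := hKL ▸ mem_image_of_mem _ hyK
    exact this ((hmk _ _).2 (hrel.symm hy))
  refine union_iUnion_homeomorph_image_ne_univ hK.isClosed (dense_setOf_rotOrbitRel hα 1)
    (countable_range _).isMeagre hKO
    (fun k : ℤ => Homeomorph.mulLeft (Circle.exp (2 * π * α) ^ k))
    (eq_univ_of_forall fun z => ?_)
  by_cases hz : Quot.mk _ z = Quot.mk (rotOrbitRel α) 1
  · exact Or.inl (hrel.symm ((hmk _ _).1 hz))
  · obtain ⟨y, hyK, hyz⟩ : Quot.mk _ z ∈ Quot.mk _ '' K := by rw [hKL]; exact hz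
    obtain ⟨k, rfl⟩ := (hmk _ _).1 hyz
    exact Or.inr (mem_iUnion.2 ⟨k, y, hyK, rfl⟩)
end
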